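/- Let A be the ground truth from the context (so ‖A‖ ≤ 1 and rank(A) = r_A), with r ≥ r_A. Suppose 𝓜 is (r+r_A+1, δ)-RIP with δ ≤ 1/(3√m). Let X₊ ∈ St(m,r) and let Θ be a symmetric r×r matrix with ‖Θ‖ ≤ 2. Then Θ₊ = X₊ᵀAX₊ − X₊ᵀ[(𝓜*𝓜 − 𝓘)(X₊ΘX₊ᵀ − A)]X₊ satisfies ‖Θ₊‖ ≤ 2. -/

import Mathlib

open Matrix MeasureTheory ProbabilityTheory BigOperators

noncomputable section

/-- Frobenius norm of a real matrix. -/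
def frob {m n : ℕ} (M : Matrix (Fin m) (Fin n) ℝ) : ℝ :=
  Real.sqrt (∑ i, ∑ j, (M i j) ^ 2)

/-- Euclidean norm of a vector in `ℝⁿ`. -/
def vnorm {n : ℕ} (v : Fin n → ℝ) : ℝ :=
  Real.sqrt (∑ i, (v i) ^ 2)

/-- Spectral norm (operator 2-norm) of a real matrix. -/
def spec {m n : ℕ} (M : Matrix (Fin m) (Fin n) ℝ) : ℝ :=
  ‖LinearMap.toContinuousLinearMap (Matrix.toEuclideanLin M)‖

theorem isHermitian_tmul {m n : ℕ} (M : Matrix (Fin m) (Fin n) ℝ) :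
    (Mᵀ * M).IsHermitian := by
  simpa [Matrix.conjTranspose_eq_transpose_of_trivial] using
    Matrix.isHermitian_conjTranspose_mul_self M

theorem posSemidef_tmul {m n : ℕ} (M : Matrix (Fin m) (Fin n) ℝ) :
    (Mᵀ * M).PosSemidef := by
  simpa [Matrix.conjTranspose_eq_transpose_of_trivial] using
    Matrix.posSemidef_conjTranspose_mul_self M

/-- The `i`-th largest singular value (1-indexed) of a real matrix, i.e. the square root of the
`i`-th largest eigenvalue of `MᵀM`; junk value `0` when `i` is out of range. -/
def svalue {m n : ℕ} (M : Matrix (Fin m) (Fin n) ℝ) (i : ℕ) : ℝ :=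
  if h : 1 ≤ i ∧ i ≤ n then
    Real.sqrt ((isHermitian_tmul M).eigenvalues
      (Tuple.sort (isHermitian_tmul M).eigenvalues ⟨n - i, by omega⟩))
  else 0

/-- Membership in the Stiefel manifold `St(m,r)`. -/
def Stiefel {m r : ℕ} (X : Matrix (Fin m) (Fin r) ℝ) : Prop :=
  Xᵀ * X = 1

/-- The Loewner order on (symmetric) real matrices: `A ⪯ B`. -/
def loewnerLE {m : ℕ} (A B : Matrix (Fin m) (Fin m) ℝ) : Prop :=
  (B - A).PosSemidef

open scoped MatrixOrder in
/-- The inverse of the positive semidefinite square root of a matrix (junk value `0` when the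
matrix is not positive semidefinite). -/
def sqrtInv {r : ℕ} (S : Matrix (Fin r) (Fin r) ℝ) : Matrix (Fin r) (Fin r) ℝ :=
  haveI := Classical.propDecidable S.PosSemidef
  if h : S.PosSemidef then (CFC.sqrt S)⁻¹ else 0

/-- The linear sensing map `𝓜` determined by feature matrices `M_i`:
`𝓜(B)_i = Tr(M_iᵀ B)`. -/
def calM {m n : ℕ} (Ms : Fin n → Matrix (Fin m) (Fin m) ℝ)
    (B : Matrix (Fin m) (Fin m) ℝ) : Fin n → ℝ :=
  fun i => ((Ms i)ᵀ * B).trace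

/-- The adjoint `𝓜*` of the sensing map: `𝓜*(y) = ∑ i, y_i M_i`. -/
def calMadj {m n : ℕ} (Ms : Fin n → Matrix (Fin m) (Fin m) ℝ)
    (y : Fin n → ℝ) : Matrix (Fin m) (Fin m) ℝ :=
  ∑ i, y i • Ms i

/-- `(𝓜*𝓜 − 𝓘)(B)`. -/
def calE {m n : ℕ} (Ms : Fin n → Matrix (Fin m) (Fin m) ℝ)
    (B : Matrix (Fin m) (Fin m) ℝ) : Matrix (Fin m) (Fin m) ℝ :=
  calMadj Ms (calM Ms B) - B

/-- The `(s, δ)`-restricted isometry property for the sensing map determined by `Ms`. -/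
def IsRIP {m n : ℕ} (Ms : Fin n → Matrix (Fin m) (Fin m) ℝ) (s : ℕ) (δ : ℝ) : Prop :=
  ∀ B : Matrix (Fin m) (Fin m) ℝ, B.IsSymm → B.rank ≤ s →
    (1 - δ) * frob B ^ 2 ≤ vnorm (calM Ms B) ^ 2 ∧
      vnorm (calM Ms B) ^ 2 ≤ (1 + δ) * frob B ^ 2

/-- The Riemannian gradient on the Stiefel manifold obtained from the Euclidean gradient `g`
at the point `X`. -/
def Rgrad {m r : ℕ} (X g : Matrix (Fin m) (Fin r) ℝ) : Matrix (Fin m) (Fin r) ℝ :=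
  (1 - X * Xᵀ) * g + (2⁻¹ : ℝ) • (X * (Xᵀ * g - gᵀ * X))

/-- One step of Riemannian gradient descent (with `μ = 2`) for the weight-normalized
matrix sensing problem. -/
def RGDstep {m r n : ℕ} (Ms : Fin n → Matrix (Fin m) (Fin m) ℝ)
    (A : Matrix (Fin m) (Fin m) ℝ) (η : ℝ)
    (p : Matrix (Fin m) (Fin r) ℝ × Matrix (Fin r) (Fin r) ℝ) :
    Matrix (Fin m) (Fin r) ℝ × Matrix (Fin r) (Fin r) ℝ :=
  let X := p.1
  let Θ := p.2
  let Gt := calMadj Ms (calM Ms (X * Θ * Xᵀ - A)) * X * Θ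
  let G := Rgrad X Gt
  let X' := (X - η • G) * sqrtInv (1 + η ^ 2 • (Gᵀ * G))
  let Θ' := X'ᵀ * A * X' - X'ᵀ * calE Ms (X' * Θ * X'ᵀ - A) * X'
  (X', Θ')

/-- The standard Gaussian ensemble on `m × r` real matrices (i.i.d. `N(0,1)` entries). -/
def gaussianEnsemble (m r : ℕ) : Measure (Fin m → Fin r → ℝ) :=
  Measure.pi fun _ : Fin m => Measure.pi fun _ : Fin r => gaussianReal 0 1

end

/-! `Xᵀ A X` has norm at most `‖A‖ = σ₁(Σ) = 1`, so it suffices that the error term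
`Xᵀ (𝓜*𝓜 − 𝓘)(B) X`, with `B = X Θ Xᵀ − A` of rank at most `r + r_A`, has norm at most `1`.
That term is symmetric, so its norm is the largest value of `|uᵀ (𝓜*𝓜 − 𝓘)(B) u|` over unit
vectors `u`. Polarizing the restricted isometry property on `B ± t uuᵀ` (rank at most
`r + r_A + 1`) bounds this by `δ ‖B‖_F`, and `‖B‖_F ≤ √m ‖B‖ ≤ 3 √m`. -/

open scoped Matrix.Norms.L2Operator

theorem spec_eq_l2_opNorm {m n : ℕ} (M : Matrix (Fin m) (Fin n) ℝ) : spec M = ‖M‖ := rfl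

namespace Matrix

theorem rank_add_le {K m n : Type*} [Field K] [Fintype n] (A B : Matrix m n K) :
    (A + B).rank ≤ A.rank + B.rank := by
  have h : LinearMap.range (A + B).mulVecLin ≤
      LinearMap.range A.mulVecLin ⊔ LinearMap.range B.mulVecLin := by
    rintro x ⟨v, rfl⟩
    rw [mulVecLin_add, LinearMap.add_apply]
    exact Submodule.add_mem_sup (LinearMap.mem_range_self _ v) (LinearMap.mem_range_self _ v)
  exact (Submodule.finrank_mono h).trans (Submodule.finrank_add_le_finrank_add_finrank _ _)

theorem rank_sub_le {K m n : Type*} [Field K] [Fintype n] (A B : Matrix m n K) :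
    (A - B).rank ≤ A.rank + B.rank := by
  have h : LinearMap.range (A - B).mulVecLin ≤
      LinearMap.range A.mulVecLin ⊔ LinearMap.range B.mulVecLin := by
    rintro x ⟨v, rfl⟩
    rw [mulVecLin_apply, sub_mulVec]
    exact Submodule.sub_mem_sup (LinearMap.mem_range_self _ v) (LinearMap.mem_range_self _ v)
  exact (Submodule.finrank_mono h).trans (Submodule.finrank_add_le_finrank_add_finrank _ _)

theorem rank_mul_mul_transpose_le {R : Type*} [CommSemiring R] [StrongRankCondition R] {m k : ℕ}
    (X : Matrix (Fin m) (Fin k) R) (S : Matrix (Fin k) (Fin k) R) : (X * S * Xᵀ).rank ≤ k :=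
  (rank_mul_le_left _ _).trans (rank_le_width _)

theorem IsSymm.mul_mul_transpose {α k l : Type*} [CommSemiring α] [Fintype k]
    {S : Matrix k k α} (hS : S.IsSymm) (X : Matrix l k α) : (X * S * Xᵀ).IsSymm := by
  simp only [IsSymm, transpose_mul, transpose_transpose, hS.eq, Matrix.mul_assoc]

theorem vec_dotProduct_vec_vecMulVec {α n : Type*} [CommSemiring α] [Fintype n]
    (S : Matrix n n α) (v : n → α) : vec S ⬝ᵥ vec (vecMulVec v v) = v ⬝ᵥ S *ᵥ v := by
  rw [vec_dotProduct_vec, trace]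
  simp only [diag, mul_apply, transpose_apply, vecMulVec_apply, dotProduct, mulVec,
    Finset.mul_sum]
  rw [Finset.sum_comm]
  exact Finset.sum_congr rfl fun i _ => Finset.sum_congr rfl fun j _ => by ring

variable {m n : Type*} [Fintype m] [Fintype n] [DecidableEq n]

theorem l2_opNorm_transpose [DecidableEq m] (M : Matrix m n ℝ) : ‖Mᵀ‖ = ‖M‖ := by
  rw [← conjTranspose_eq_transpose_of_trivial, l2_opNorm_conjTranspose]

theorem l2_opNorm_le_one_of_transpose_mul_self {X : Matrix m n ℝ} (hX : Xᵀ * X = 1) :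
    ‖X‖ ≤ 1 := by
  have h := l2_opNorm_conjTranspose_mul_self X
  rw [conjTranspose_eq_transpose_of_trivial, hX, ← diagonal_one, l2_opNorm_diagonal] at h
  have h₁ : ‖(fun _ => 1 : n → ℝ)‖ ≤ 1 :=
    pi_norm_le_iff_of_nonneg zero_le_one |>.2 fun _ => by simp
  nlinarith [norm_nonneg X]

theorem l2_opNorm_mul_mul_transpose_le [DecidableEq m] {X : Matrix m n ℝ} (hX : ‖X‖ ≤ 1)
    (M : Matrix n n ℝ) : ‖X * M * Xᵀ‖ ≤ ‖M‖ :=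
  calc ‖X * M * Xᵀ‖ ≤ ‖X‖ * ‖M‖ * ‖Xᵀ‖ := by grw [l2_opNorm_mul, l2_opNorm_mul]
    _ ≤ 1 * ‖M‖ * 1 := by rw [l2_opNorm_transpose]; gcongr
    _ = ‖M‖ := by ring

theorem l2_opNorm_transpose_mul_mul_le [DecidableEq m] {X : Matrix n m ℝ} (hX : ‖X‖ ≤ 1)
    (M : Matrix n n ℝ) : ‖Xᵀ * M * X‖ ≤ ‖M‖ := by
  simpa using l2_opNorm_mul_mul_transpose_le ((l2_opNorm_transpose X).trans_le hX) M

theorem l2_opNorm_le_of_abs_dotProduct_mulVec_le {S : Matrix n n ℝ} (hS : S.IsSymm) {c : ℝ}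
    (hc : 0 ≤ c) (h : ∀ x, |x ⬝ᵥ S *ᵥ x| ≤ c * (x ⬝ᵥ x)) : ‖S‖ ≤ c := by
  have hT : (toEuclideanCLM (𝕜 := ℝ) S).IsSymmetric :=
    isSymmetric_toEuclideanLin_iff.mpr
      (by rw [IsHermitian, conjTranspose_eq_transpose_of_trivial]; exact hS)
  rw [← l2_opNorm_toEuclideanCLM]
  refine (ContinuousLinearMap.norm_eq_iSup_rayleighQuotient _ hT).trans_le
    (ciSup_le fun x => ?_)
  rw [ContinuousLinearMap.rayleighQuotient, ContinuousLinearMap.reApplyInnerSelf_apply, abs_div,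
    abs_sq]
  rcases (norm_nonneg x).eq_or_lt with hx | hx
  · simp [← hx, hc]
  rw [div_le_iff₀ (by positivity), ← real_inner_self_eq_norm_sq]
  simp only [EuclideanSpace.inner_eq_star_dotProduct, ofLp_toEuclideanCLM, star_trivial,
    RCLike.re_to_real]
  exact h x

end Matrix

section Frobenius

variable {m k : ℕ}

theorem frob_nonneg (M : Matrix (Fin m) (Fin k) ℝ) : 0 ≤ frob M := Real.sqrt_nonneg _

theorem frob_sq (M : Matrix (Fin m) (Fin k) ℝ) : frob M ^ 2 = ∑ i, ∑ j, M i j ^ 2 :=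
  Real.sq_sqrt (by positivity)

theorem frob_sq_eq_vec_dotProduct (M : Matrix (Fin m) (Fin k) ℝ) :
    frob M ^ 2 = vec M ⬝ᵥ vec M := by
  rw [frob_sq, vec_dotProduct_vec, trace]
  simp only [diag, mul_apply, transpose_apply, sq]
  exact Finset.sum_comm

theorem eq_zero_of_frob_eq_zero {M : Matrix (Fin m) (Fin k) ℝ} (h : frob M = 0) : M = 0 := by
  have h₂ := frob_sq_eq_vec_dotProduct M
  rwa [h, zero_pow two_ne_zero, eq_comm, dotProduct_self_eq_zero, vec_eq_zero_iff] at h₂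

theorem frob_le_sqrt_mul_l2_opNorm (M : Matrix (Fin m) (Fin k) ℝ) : frob M ≤ √k * ‖M‖ := by
  have hcol (j : Fin k) : ∑ i, M i j ^ 2 ≤ ‖M‖ ^ 2 := by
    have h := l2_opNorm_mulVec M (EuclideanSpace.single j 1)
    rw [PiLp.norm_single, norm_one, mul_one] at h
    simpa [EuclideanSpace.norm_sq_eq, mulVec_single] using pow_le_pow_left₀ (norm_nonneg _) h 2
  have hsq : frob M ^ 2 ≤ k * ‖M‖ ^ 2 := by
    rw [frob_sq, Finset.sum_comm]
    simpa using Finset.sum_le_sum fun j (_ : j ∈ Finset.univ) => hcol j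
  rw [← Real.sqrt_sq (norm_nonneg M), ← Real.sqrt_mul (Nat.cast_nonneg k)]
  exact Real.le_sqrt_of_sq_le hsq

end Frobenius

theorem svalue_nonneg {m n : ℕ} (M : Matrix (Fin m) (Fin n) ℝ) (i : ℕ) : 0 ≤ svalue M i := by
  unfold svalue; split_ifs <;> positivity

theorem le_svalue_one_sq_of_mem_spectrum {m n : ℕ} {M : Matrix (Fin m) (Fin n) ℝ} {μ : ℝ}
    (hμ : μ ∈ spectrum ℝ (Mᵀ * M)) : μ ≤ svalue M 1 ^ 2 := by
  set f := (isHermitian_tmul M).eigenvalues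
  rw [(isHermitian_tmul M).spectrum_real_eq_range_eigenvalues] at hμ
  obtain ⟨i, rfl⟩ := hμ
  have hn : 1 ≤ 1 ∧ 1 ≤ n := ⟨le_rfl, Fin.pos i⟩
  rw [svalue, dif_pos hn, Real.sq_sqrt ((posSemidef_tmul M).eigenvalues_nonneg _)]
  have hi : (Tuple.sort f).symm i ≤ ⟨n - 1, by omega⟩ := Fin.le_def.2 (by dsimp only; omega)
  simpa using Tuple.monotone_sort f hi

theorem l2_opNorm_diagonal_le_svalue_one {k : ℕ} (d : Fin k → ℝ) :
    ‖diagonal d‖ ≤ svalue (diagonal d) 1 := by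
  rw [l2_opNorm_diagonal]
  refine pi_norm_le_iff_of_nonneg (svalue_nonneg _ _) |>.2 fun i => ?_
  have hi : d i * d i ∈ spectrum ℝ ((diagonal d)ᵀ * diagonal d) := by
    simp [diagonal_transpose, diagonal_mul_diagonal, spectrum_diagonal]
  rw [Real.norm_eq_abs, ← sq_le_sq₀ (abs_nonneg _) (svalue_nonneg _ _), sq_abs, sq]
  exact le_svalue_one_sq_of_mem_spectrum hi

section Sensing

variable {m n s : ℕ} (Ms : Fin n → Matrix (Fin m) (Fin m) ℝ)

theorem vnorm_sq_eq_dotProduct (v : Fin n → ℝ) : vnorm v ^ 2 = v ⬝ᵥ v := by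
  rw [vnorm, Real.sq_sqrt (by positivity)]
  simp only [dotProduct, sq]

theorem calM_apply (B : Matrix (Fin m) (Fin m) ℝ) (k : Fin n) :
    calM Ms B k = vec (Ms k) ⬝ᵥ vec B :=
  (vec_dotProduct_vec _ _).symm

theorem calM_add (B C : Matrix (Fin m) (Fin m) ℝ) : calM Ms (B + C) = calM Ms B + calM Ms C := by
  ext k
  simp only [calM_apply, vec_add, dotProduct_add, Pi.add_apply]

theorem calM_sub (B C : Matrix (Fin m) (Fin m) ℝ) : calM Ms (B - C) = calM Ms B - calM Ms C := by
  ext k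
  simp only [calM_apply, vec_sub, dotProduct_sub, Pi.sub_apply]

theorem vec_calE_dotProduct (B C : Matrix (Fin m) (Fin m) ℝ) :
    vec (calE Ms B) ⬝ᵥ vec C = calM Ms B ⬝ᵥ calM Ms C - vec B ⬝ᵥ vec C := by
  simp only [calE, calMadj, vec_sub, vec_sum, vec_smul, sub_dotProduct, sum_dotProduct,
    smul_dotProduct, ← calM_apply]
  rfl

theorem calE_isSymm (hMs : ∀ i, (Ms i).IsSymm) {B : Matrix (Fin m) (Fin m) ℝ} (hB : B.IsSymm) :
    (calE Ms B).IsSymm := by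
  refine IsSymm.sub ?_ hB
  simp only [calMadj, IsSymm, transpose_sum, transpose_smul, (hMs _).eq]

variable {Ms} {δ : ℝ}

theorem abs_vec_calE_dotProduct_le (hRIP : IsRIP Ms s δ) {B C : Matrix (Fin m) (Fin m) ℝ}
    (hB : B.IsSymm) (hC : C.IsSymm) (hadd : (B + C).rank ≤ s) (hsub : (B - C).rank ≤ s) :
    |vec (calE Ms B) ⬝ᵥ vec C| ≤ δ / 2 * (frob B ^ 2 + frob C ^ 2) := by
  have hp := hRIP (B + C) (hB.add hC) hadd
  have hm := hRIP (B - C) (hB.sub hC) hsub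
  simp only [vnorm_sq_eq_dotProduct, frob_sq_eq_vec_dotProduct, calM_add, calM_sub, vec_add,
    vec_sub, add_dotProduct, dotProduct_add, sub_dotProduct, dotProduct_sub,
    dotProduct_comm (calM Ms C), dotProduct_comm (vec C)] at hp hm
  rw [vec_calE_dotProduct, frob_sq_eq_vec_dotProduct, frob_sq_eq_vec_dotProduct, abs_le]
  constructor <;> linarith [hp.1, hp.2, hm.1, hm.2]

theorem abs_dotProduct_calE_mulVec_le (hRIP : IsRIP Ms s δ) {B : Matrix (Fin m) (Fin m) ℝ}
    (hB : B.IsSymm) (hrk : B.rank + 1 ≤ s) (v : Fin m → ℝ) :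
    |v ⬝ᵥ calE Ms B *ᵥ v| ≤ δ * frob B * (v ⬝ᵥ v) := by
  rcases (frob_nonneg B).eq_or_lt with hB0 | hBpos
  · rw [← hB0, eq_zero_of_frob_eq_zero hB0.symm]
    simp [calE, calM, calMadj]
  have hvv : 0 ≤ v ⬝ᵥ v := Finset.sum_nonneg fun i _ => mul_self_nonneg (v i)
  rcases hvv.eq_or_lt with hv0 | hvpos
  · simp [dotProduct_self_eq_zero.1 hv0.symm]
  -- the rank-one test matrix `t vvᵀ` is scaled to have the Frobenius norm of `B`
  set t := frob B / (v ⬝ᵥ v)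
  have hrk₁ (c : ℝ) : (B + c • vecMulVec v v).rank ≤ s := by
    rw [← smul_vecMulVec]
    exact (rank_add_le _ _).trans (by linarith [rank_vecMulVec_le (c • v) v])
  have hC : (t • vecMulVec v v).IsSymm := IsSymm.smul (transpose_vecMulVec v v) t
  have h := abs_vec_calE_dotProduct_le hRIP hB hC (hrk₁ t) (by
    simpa only [sub_eq_add_neg, ← neg_smul] using hrk₁ (-t))
  have hfC : frob (t • vecMulVec v v) ^ 2 = frob B ^ 2 := by
    rw [frob_sq_eq_vec_dotProduct, vec_smul, smul_dotProduct, dotProduct_smul,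
      vec_dotProduct_vec_vecMulVec, vecMulVec_mulVec, op_smul_eq_smul, dotProduct_smul]
    simp only [t, smul_eq_mul]
    field_simp
  rw [vec_smul, dotProduct_smul, vec_dotProduct_vec_vecMulVec, hfC, smul_eq_mul, abs_mul,
    abs_of_pos (by positivity), div_mul_eq_mul_div, div_le_iff₀ hvpos] at h
  exact le_of_mul_le_mul_left (by linarith) hBpos

theorem l2_opNorm_transpose_mul_calE_mul_le {r : ℕ} (hMs : ∀ i, (Ms i).IsSymm) (hδ : 0 ≤ δ)
    (hRIP : IsRIP Ms s δ) {B : Matrix (Fin m) (Fin m) ℝ} (hB : B.IsSymm) (hrk : B.rank + 1 ≤ s)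
    {X : Matrix (Fin m) (Fin r) ℝ} (hX : Xᵀ * X = 1) :
    ‖Xᵀ * calE Ms B * X‖ ≤ δ * frob B := by
  have hS : (Xᵀ * calE Ms B * X).IsSymm := by
    simpa using (calE_isSymm Ms hMs hB).mul_mul_transpose Xᵀ
  refine l2_opNorm_le_of_abs_dotProduct_mulVec_le hS (by positivity [frob_nonneg B]) fun x => ?_
  have hquad : x ⬝ᵥ (Xᵀ * calE Ms B * X) *ᵥ x = (X *ᵥ x) ⬝ᵥ calE Ms B *ᵥ (X *ᵥ x) := by
    rw [← mulVec_mulVec, ← mulVec_mulVec, dotProduct_mulVec, vecMul_transpose]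
  have hnorm : (X *ᵥ x) ⬝ᵥ (X *ᵥ x) = x ⬝ᵥ x := by
    rw [dotProduct_mulVec, ← vecMul_transpose, vecMul_vecMul, hX, vecMul_one]
  rw [hquad, ← hnorm]
  exact abs_dotProduct_calE_mulVec_le hRIP hB hrk _

end Sensing

theorem stmt6_general {m r r_A n : ℕ}
    (U : Matrix (Fin m) (Fin r_A) ℝ) (hU : Stiefel U)
    (d : Fin r_A → ℝ)
    (Sg : Matrix (Fin r_A) (Fin r_A) ℝ) (hSg : Sg = Matrix.diagonal d)
    (hσ1 : svalue Sg 1 = 1)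
    (A : Matrix (Fin m) (Fin m) ℝ) (hA : A = U * Sg * Uᵀ)
    (Ms : Fin n → Matrix (Fin m) (Fin m) ℝ) (hMs : ∀ i, (Ms i).IsSymm)
    (δ : ℝ) (hδ0 : 0 ≤ δ)
    (hRIP : IsRIP Ms (r + r_A + 1) δ)
    (hδ : δ ≤ 1 / (3 * Real.sqrt (m : ℝ)))
    (Xp : Matrix (Fin m) (Fin r) ℝ) (hXp : Stiefel Xp)
    (Θ : Matrix (Fin r) (Fin r) ℝ) (hΘsym : Θ.IsSymm) (hΘ : spec Θ ≤ 2) :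
    spec (Xpᵀ * A * Xp - Xpᵀ * calE Ms (Xp * Θ * Xpᵀ - A) * Xp) ≤ 2 := by
  rw [spec_eq_l2_opNorm] at hΘ ⊢
  subst hA hSg
  have hXp₁ : ‖Xp‖ ≤ 1 := l2_opNorm_le_one_of_transpose_mul_self hXp
  have hA₁ : ‖U * diagonal d * Uᵀ‖ ≤ 1 :=
    (l2_opNorm_mul_mul_transpose_le (l2_opNorm_le_one_of_transpose_mul_self hU) _).trans
      (hσ1 ▸ l2_opNorm_diagonal_le_svalue_one d)
  set B := Xp * Θ * Xpᵀ - U * diagonal d * Uᵀ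
  have hB : B.IsSymm :=
    (hΘsym.mul_mul_transpose Xp).sub ((isSymm_diagonal d).mul_mul_transpose U)
  have hrk : B.rank + 1 ≤ r + r_A + 1 := by
    linarith [rank_sub_le (Xp * Θ * Xpᵀ) (U * diagonal d * Uᵀ), rank_mul_mul_transpose_le Xp Θ,
      rank_mul_mul_transpose_le U (diagonal d)]
  have hfrob : frob B ≤ 3 * √m := by
    have hB₃ : ‖B‖ ≤ 3 :=
      (norm_sub_le _ _).trans (by linarith [l2_opNorm_mul_mul_transpose_le hXp₁ Θ])
    nlinarith [frob_le_sqrt_mul_l2_opNorm B, Real.sqrt_nonneg m]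
  have hδB : δ * frob B ≤ 1 :=
    calc δ * frob B ≤ 1 / (3 * √m) * (3 * √m) :=
          mul_le_mul hδ hfrob (frob_nonneg B) (by positivity)
      _ ≤ 1 := by rw [one_div_mul_eq_div]; exact div_self_le_one _
  have hXAX := (l2_opNorm_transpose_mul_mul_le hXp₁ _).trans hA₁
  have hXEX := (l2_opNorm_transpose_mul_calE_mul_le hMs hδ0 hRIP hB hrk hXp).trans hδB
  linarith [norm_sub_le (Xpᵀ * (U * diagonal d * Uᵀ) * Xp) (Xpᵀ * calE Ms B * Xp)]

theorem stmt6 {m r r_A n : ℕ} (h1 : 1 ≤ r_A) (h2 : r_A ≤ r)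
    (κ : ℝ) (hκ : 1 ≤ κ)
    (U : Matrix (Fin m) (Fin r_A) ℝ) (hU : Stiefel U)
    (d : Fin r_A → ℝ) (hd : ∀ i, 0 < d i)
    (Sg : Matrix (Fin r_A) (Fin r_A) ℝ) (hSg : Sg = Matrix.diagonal d)
    (hσ1 : svalue Sg 1 = 1) (hσr : svalue Sg r_A = 1 / κ)
    (A : Matrix (Fin m) (Fin m) ℝ) (hA : A = U * Sg * Uᵀ)
    (Ms : Fin n → Matrix (Fin m) (Fin m) ℝ) (hMs : ∀ i, (Ms i).IsSymm)
    (δ : ℝ) (hδ0 : 0 ≤ δ) (hδ1 : δ < 1)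
    (hRIP : IsRIP Ms (r + r_A + 1) δ)
    (hδ : δ ≤ 1 / (3 * Real.sqrt (m : ℝ)))
    (Xp : Matrix (Fin m) (Fin r) ℝ) (hXp : Stiefel Xp)
    (Θ : Matrix (Fin r) (Fin r) ℝ) (hΘsym : Θ.IsSymm) (hΘ : spec Θ ≤ 2) :
    spec (Xpᵀ * A * Xp - Xpᵀ * calE Ms (Xp * Θ * Xpᵀ - A) * Xp) ≤ 2 :=
  stmt6_general U hU d Sg hSg hσ1 A hA Ms hMs δ hδ0 hRIP hδ Xp hXp Θ hΘsym hΘ
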